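/- Commutation identity of evolutionary variations with Euler-Lagrange derivatives: for any local functions f and Q^i, δ_Q(δf/δφ^i) = δ(δ_Q f)/δφ^i − Σ_{(μ)} (-1)^{|μ|} ∂_{(μ)}[(∂Q^j/∂φ^i_{(μ)}) (δf/δφ^j)]. -/

import Mathlib

open MvPolynomial

abbrev JetVar (ι : Type) (n : ℕ) : Type := (ι × Multiset (Fin n)) ⊕ Fin n

abbrev LocalFn (ι : Type) (n : ℕ) : Type := MvPolynomial (JetVar ι n) ℝ

variable {ι : Type} {n : ℕ} [DecidableEq ι]

noncomputable def tD (ν : Fin n) (f : LocalFn ι n) : LocalFn ι n :=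
  pderiv (Sum.inr ν) f +
    ∑ v ∈ f.vars,
      (match v with
      | Sum.inl (i, μ) => X (Sum.inl (i, ν ::ₘ μ)) * pderiv (Sum.inl (i, μ)) f
      | Sum.inr _ => 0 : LocalFn ι n)

noncomputable def tDm (μ : Multiset (Fin n)) (f : LocalFn ι n) : LocalFn ι n :=
  (μ.sort (· ≤ ·)).foldr tD f

noncomputable def EL (i : ι) (f : LocalFn ι n) : LocalFn ι n :=
  ∑ v ∈ f.vars,
    (match v with
    | Sum.inl (j, μ) =>
        if j = i then ((-1 : ℝ) ^ Multiset.card μ) • tDm μ (pderiv (Sum.inl (j, μ)) f)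
        else 0
    | Sum.inr _ => 0 : LocalFn ι n)

noncomputable def evQ (Q : ι → LocalFn ι n) (f : LocalFn ι n) : LocalFn ι n :=
  ∑ v ∈ f.vars,
    (match v with
    | Sum.inl (i, μ) => tDm μ (Q i) * pderiv (Sum.inl (i, μ)) f
    | Sum.inr _ => 0 : LocalFn ι n)

/-- The combination Σ_{j,(μ)} (-1)^{|μ|} ∂_{(μ)}[(∂Q^j/∂φ^i_{(μ)}) g_j]. -/
noncomputable def symTail {ι : Type} {n : ℕ} [DecidableEq ι] [Fintype ι]
    (Q : ι → LocalFn ι n) (g : ι → LocalFn ι n) (i : ι) : LocalFn ι n :=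
  ∑ j : ι, ∑ v ∈ (Q j).vars,
    (match v with
    | Sum.inl (i', μ) =>
        if i' = i then
          ((-1 : ℝ) ^ Multiset.card μ) •
            tDm μ (pderiv (Sum.inl (i', μ) : JetVar ι n) (Q j) * g j)
        else 0
    | Sum.inr _ => 0 : LocalFn ι n)

/-!
`tD ν` and `evQ Q` are derivations of the polynomial algebra of jet variables, so every
commutation rule between them and the partial derivatives `∂/∂φ^i_(μ)` is a derivation too and
can be checked on the generators: total derivatives commute, `δ_Q` commutes with `D_ν`, and
`[∂/∂φ^i_(μ), D_ν] = ∂/∂φ^i_(μ - ν)` (zero if `ν ∉ μ`).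

Differentiating `δ_Q f = Σ (D_κ Q^j) ∂f/∂φ^j_(κ)` in `φ^i_(μ)` gives `δ_Q (∂f/∂φ^i_(μ))` plus
`Σ ∂(D_κ Q^j)/∂φ^i_(μ) · ∂f/∂φ^j_(κ)`. Summed with the Euler–Lagrange weights, the first part
gives `δ_Q (δf/δφ^i)`. The second is a sum of values of the formal adjoint
`h ↦ Σ_μ (-1)^|μ| D_μ (∂a/∂φ^i_(μ) · h)` of the linearisation of `a = D_κ Q^j`; integrating by
parts, this adjoint turns `D_ν a` into `-D_ν h`, which moves `D_κ` onto `∂f/∂φ^j_(κ)` and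
reassembles `δf/δφ^j`.
-/

theorem Multiset.cons_eq_iff_mem_and_eq_erase {α : Type*} [DecidableEq α] {a : α}
    {s t : Multiset α} : a ::ₘ s = t ↔ a ∈ t ∧ s = t.erase a := by
  constructor
  · rintro rfl
    simp
  · rintro ⟨h, rfl⟩
    exact Multiset.cons_erase h

section MultisetFinsum

variable {α M : Type*} [DecidableEq α] [AddCommMonoid M]

theorem finsum_ite_mem_erase (a : α) (F : Multiset α → M) :
    ∑ᶠ μ : Multiset α, (if a ∈ μ then F (μ.erase a) else 0) = ∑ᶠ μ, F μ := by
  have hsupp : (Function.support fun μ : Multiset α => if a ∈ μ then F (μ.erase a) else 0) ⊆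
      Set.range (a ::ₘ ·) := fun μ hμ => by
    by_cases ha : a ∈ μ
    · exact ⟨μ.erase a, Multiset.cons_erase ha⟩
    · simp [ha] at hμ
  rw [← Set.indicator_eq_self.2 hsupp, ← finsum_mem_def,
    finsum_mem_range fun _ _ h => (Multiset.cons_inj_right a).1 h]
  simp

theorem Function.HasFiniteSupport.ite_mem_erase {F : Multiset α → M}
    (hF : Function.HasFiniteSupport F) (a : α) :
    Function.HasFiniteSupport fun μ : Multiset α => if a ∈ μ then F (μ.erase a) else 0 :=
  (hF.image (a ::ₘ ·)).subset fun μ hμ => by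
    by_cases ha : a ∈ μ
    · simp only [Function.mem_support, ha, if_true] at hμ
      exact ⟨μ.erase a, hμ, Multiset.cons_erase ha⟩
    · simp [ha] at hμ

end MultisetFinsum

namespace MvPolynomial

variable {R σ : Type*}

theorem derivation_apply_eq_sum_vars [CommSemiring R]
    (D : Derivation R (MvPolynomial σ R) (MvPolynomial σ R))
    (f : MvPolynomial σ R) : D f = ∑ v ∈ f.vars, D (X v) * pderiv v f := by
  classical
  let E : Derivation R (MvPolynomial σ R) (MvPolynomial σ R) := ∑ v ∈ f.vars, D (X v) • pderiv v
  have hE : ∀ g, E g = ∑ v ∈ f.vars, D (X v) * pderiv v g := fun g => by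
    rw [show ⇑E = ∑ v ∈ f.vars, ⇑(D (X v) • pderiv v) from
      map_sum Derivation.coeFnAddMonoidHom _ _, Finset.sum_apply]
    rfl
  rw [← hE]
  exact derivation_eq_of_forall_mem_vars fun i hi => by
    simp [hE, pderiv_X, Pi.single_apply, hi]

theorem commutator_pderiv_mkDerivation [CommRing R] (r : σ) (c : σ → MvPolynomial σ R) :
    ⁅(pderiv r : Derivation R (MvPolynomial σ R) _), mkDerivation R c⁆ =
      mkDerivation R fun v => pderiv r (c v) := by
  classical
  refine derivation_ext fun v => ?_
  rw [Derivation.commutator_apply, mkDerivation_X, mkDerivation_X, pderiv_X, Pi.single_apply]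
  split_ifs <;> simp

variable [CommSemiring R] {β M : Type*} {g : β → σ}

theorem hasFiniteSupport_of_pderiv [Zero M] (hg : Function.Injective g) (f : MvPolynomial σ R)
    {F : β → M} (hF : ∀ b, pderiv (g b) f = 0 → F b = 0) : Function.HasFiniteSupport F :=
  (f.vars.finite_toSet.preimage hg.injOn).subset fun b hb =>
    by_contra fun h => hb (hF b (pderiv_eq_zero_of_notMem_vars h))

theorem sum_vars_eq_finsum [AddCommMonoid M] (hg : Function.Injective g) (f : MvPolynomial σ R)
    {G : σ → M} (hvars : ∀ v, pderiv v f = 0 → G v = 0) (hrange : ∀ v ∉ Set.range g, G v = 0) :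
    ∑ v ∈ f.vars, G v = ∑ᶠ b, G (g b) := by
  rw [← finsum_eq_sum_of_support_subset G fun v hv =>
      by_contra fun h => hv (hvars v (pderiv_eq_zero_of_notMem_vars h)),
    ← finsum_mem_range hg, finsum_mem_def,
    Set.indicator_eq_self.2 (Function.support_subset_iff'.2 hrange)]

end MvPolynomial

section JetCalculus

variable {ι : Type} {n : ℕ}

noncomputable def jetShift (ν : Fin n) : JetVar ι n → LocalFn ι n
  | Sum.inl (i, μ) => X (Sum.inl (i, ν ::ₘ μ))
  | Sum.inr _ => 0

noncomputable def totalDeriv (ν : Fin n) : Derivation ℝ (LocalFn ι n) (LocalFn ι n) :=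
  pderiv (Sum.inr ν) + mkDerivation ℝ (jetShift ν)

theorem totalDeriv_apply (ν : Fin n) (f : LocalFn ι n) : totalDeriv ν f = tD ν f := by
  rw [totalDeriv, Derivation.add_apply, tD, derivation_apply_eq_sum_vars (mkDerivation ℝ _)]
  congr 1
  refine Finset.sum_congr rfl fun v _ => ?_
  rcases v with ⟨i, μ⟩ | x <;> simp [jetShift]

theorem totalDeriv_X_inl (ν : Fin n) (p : ι × Multiset (Fin n)) :
    totalDeriv ν (X (Sum.inl p) : LocalFn ι n) = X (Sum.inl (p.1, ν ::ₘ p.2)) := by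
  classical
  simp [totalDeriv, jetShift, pderiv_X]

theorem totalDeriv_X_inr (ν x : Fin n) :
    totalDeriv ν (X (Sum.inr x) : LocalFn ι n) = C (if x = ν then 1 else 0) := by
  classical
  simp [totalDeriv, jetShift, pderiv_X, Pi.single_apply]

theorem commutator_totalDeriv (ν ρ : Fin n) :
    ⁅totalDeriv (ι := ι) ν, totalDeriv (ι := ι) ρ⁆ = 0 := by
  refine derivation_ext fun v => ?_
  rcases v with p | x
  · simp [Derivation.commutator_apply, totalDeriv_X_inl, Multiset.cons_swap]
  · rw [Derivation.commutator_apply, totalDeriv_X_inr, totalDeriv_X_inr, derivation_C,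
      derivation_C, sub_zero, Derivation.zero_apply]

theorem tD_comm (ν ρ : Fin n) (f : LocalFn ι n) : tD ν (tD ρ f) = tD ρ (tD ν f) := by
  simpa [Derivation.commutator_apply, sub_eq_zero, totalDeriv_apply] using
    congr($(commutator_totalDeriv (ι := ι) ν ρ) f)

@[simp] theorem tDm_zero (f : LocalFn ι n) : tDm 0 f = f := by
  rw [tDm, Multiset.sort_zero]
  rfl

theorem tDm_cons (ν : Fin n) (μ : Multiset (Fin n)) (f : LocalFn ι n) :
    tDm (ν ::ₘ μ) f = tD ν (tDm μ f) := by
  have hperm : ((ν ::ₘ μ).sort (· ≤ ·)).Perm (ν :: μ.sort (· ≤ ·)) := by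
    rw [← Multiset.coe_eq_coe, Multiset.sort_eq, ← Multiset.cons_coe, Multiset.sort_eq]
  rw [tDm, tDm, hperm.foldr_eq' (f := tD) (fun _ _ _ _ _ => tD_comm _ _ _)]
  rfl

noncomputable def tDmLinear (μ : Multiset (Fin n)) : LocalFn ι n →ₗ[ℝ] LocalFn ι n :=
  ((μ.sort (· ≤ ·)).map fun ν => ((totalDeriv ν : Derivation ℝ (LocalFn ι n) (LocalFn ι n)) :
    LocalFn ι n →ₗ[ℝ] LocalFn ι n)).prod

theorem coe_tDmLinear (μ : Multiset (Fin n)) : ⇑(tDmLinear (ι := ι) μ) = tDm μ := by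
  funext f
  rw [tDmLinear, tDm]
  induction μ.sort (· ≤ ·) with
  | nil => rfl
  | cons ν l ih =>
    rw [List.map_cons, List.prod_cons, Module.End.mul_apply, ih, List.foldr_cons,
      ← totalDeriv_apply]
    rfl

@[simp] theorem tDm_add (μ : Multiset (Fin n)) (f g : LocalFn ι n) :
    tDm μ (f + g) = tDm μ f + tDm μ g := by
  simp only [← coe_tDmLinear, map_add]

@[simp] theorem tDm_smul (μ : Multiset (Fin n)) (c : ℝ) (f : LocalFn ι n) :
    tDm μ (c • f) = c • tDm μ f := by
  simp only [← coe_tDmLinear, map_smul]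

@[simp] theorem tDm_sub (μ : Multiset (Fin n)) (f g : LocalFn ι n) :
    tDm μ (f - g) = tDm μ f - tDm μ g := by
  simp only [← coe_tDmLinear, map_sub]

@[simp] theorem tDm_apply_zero (μ : Multiset (Fin n)) : tDm μ (0 : LocalFn ι n) = 0 := by
  simp only [← coe_tDmLinear, map_zero]

theorem tDm_tD (μ : Multiset (Fin n)) (ν : Fin n) (f : LocalFn ι n) :
    tDm μ (tD ν f) = tD ν (tDm μ f) := by
  induction μ using Multiset.induction_on with
  | empty => simp
  | cons ρ μ ih => rw [tDm_cons, tDm_cons, ih, tD_comm]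

theorem commutator_pderiv_totalDeriv (i : ι) (μ : Multiset (Fin n)) (ν : Fin n) :
    ⁅(pderiv (Sum.inl (i, μ)) : Derivation ℝ (LocalFn ι n) _), totalDeriv ν⁆ =
      if ν ∈ μ then pderiv (Sum.inl (i, μ.erase ν)) else 0 := by
  classical
  refine derivation_ext fun v => ?_
  rcases v with ⟨j, κ⟩ | x
  · rw [Derivation.commutator_apply, totalDeriv_X_inl, pderiv_X, pderiv_X]
    by_cases hν : ν ∈ μ <;>
      simp [hν, Pi.single_apply, apply_ite, Multiset.cons_eq_iff_mem_and_eq_erase, pderiv_X]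
  · simp only [Derivation.commutator_apply, totalDeriv_X_inr, pderiv_X]
    split_ifs <;> simp [pderiv_X]

theorem pderiv_tD (i : ι) (μ : Multiset (Fin n)) (ν : Fin n) (f : LocalFn ι n) :
    pderiv (Sum.inl (i, μ)) (tD ν f) =
      tD ν (pderiv (Sum.inl (i, μ)) f) +
        if ν ∈ μ then pderiv (Sum.inl (i, μ.erase ν)) f else 0 := by
  have h := congr($(commutator_pderiv_totalDeriv i μ ν) f)
  rw [Derivation.commutator_apply, totalDeriv_apply, totalDeriv_apply, sub_eq_iff_eq_add'] at h
  rw [h]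
  split_ifs <;> rfl

theorem tD_mul (ν : Fin n) (f g : LocalFn ι n) : tD ν (f * g) = tD ν f * g + f * tD ν g := by
  rw [← totalDeriv_apply, Derivation.leibniz, totalDeriv_apply, totalDeriv_apply, smul_eq_mul,
    smul_eq_mul, add_comm, mul_comm g]

end JetCalculus

section Evolutionary

variable {ι : Type} {n : ℕ}

noncomputable def evCoeff (Q : ι → LocalFn ι n) : JetVar ι n → LocalFn ι n
  | Sum.inl (i, μ) => tDm μ (Q i)
  | Sum.inr _ => 0

noncomputable def evolutionaryField (Q : ι → LocalFn ι n) :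
    Derivation ℝ (LocalFn ι n) (LocalFn ι n) :=
  mkDerivation ℝ (evCoeff Q)

theorem evolutionaryField_apply (Q : ι → LocalFn ι n) (f : LocalFn ι n) :
    evolutionaryField Q f = evQ Q f := by
  rw [evolutionaryField, derivation_apply_eq_sum_vars, evQ]
  refine Finset.sum_congr rfl fun v _ => ?_
  rcases v with ⟨i, μ⟩ | x <;> simp [evCoeff]

theorem evQ_tD (Q : ι → LocalFn ι n) (ν : Fin n) (f : LocalFn ι n) :
    evQ Q (tD ν f) = tD ν (evQ Q f) := by
  have hcomm : ⁅evolutionaryField Q, totalDeriv (ι := ι) ν⁆ = 0 := by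
    refine derivation_ext fun v => ?_
    rcases v with ⟨i, μ⟩ | x
    · rw [Derivation.commutator_apply, totalDeriv_X_inl, evolutionaryField, mkDerivation_X,
        mkDerivation_X]
      simp [evCoeff, tDm_cons, totalDeriv_apply]
    · rw [Derivation.commutator_apply, totalDeriv_X_inr, derivation_C, evolutionaryField,
        mkDerivation_X]
      simp [evCoeff]
  simpa [Derivation.commutator_apply, sub_eq_zero, totalDeriv_apply, evolutionaryField_apply]
    using congr($hcomm f)

theorem evQ_tDm (Q : ι → LocalFn ι n) (μ : Multiset (Fin n)) (f : LocalFn ι n) :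
    evQ Q (tDm μ f) = tDm μ (evQ Q f) := by
  induction μ using Multiset.induction_on with
  | empty => simp
  | cons ν μ ih => rw [tDm_cons, tDm_cons, evQ_tD, ih]

theorem pderiv_evQ (Q : ι → LocalFn ι n) (r : JetVar ι n) (f : LocalFn ι n) :
    pderiv r (evQ Q f) =
      evQ Q (pderiv r f) + ∑ v ∈ f.vars, pderiv r (evCoeff Q v) * pderiv v f := by
  have h := congr($(commutator_pderiv_mkDerivation r (evCoeff Q)) f)
  rw [Derivation.commutator_apply,
    derivation_apply_eq_sum_vars (mkDerivation ℝ fun v => pderiv r (evCoeff Q v))] at h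
  change pderiv r (evolutionaryField Q f) - evolutionaryField Q (pderiv r f) = _ at h
  simp only [mkDerivation_X, evolutionaryField_apply] at h
  rw [← h, add_sub_cancel]

end Evolutionary

section FrechetAdjoint

variable {ι : Type} {n : ℕ}

theorem hasFiniteSupport_smul_pderiv_mul (i : ι) (a h : LocalFn ι n)
    (c : Multiset (Fin n) → ℝ) (L : Multiset (Fin n) → LocalFn ι n → LocalFn ι n)
    (hL : ∀ μ, L μ 0 = 0) :
    Function.HasFiniteSupport fun μ => c μ • L μ (pderiv (Sum.inl (i, μ)) a * h) :=
  hasFiniteSupport_of_pderiv (g := fun μ => Sum.inl (i, μ)) (fun _ _ hμ => by simpa using hμ) a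
    fun μ hμ => by simp [hμ, hL]

noncomputable def frechetAdjoint (i : ι) (a : LocalFn ι n) : LocalFn ι n →ₗ[ℝ] LocalFn ι n where
  toFun h := ∑ᶠ μ, ((-1 : ℝ) ^ Multiset.card μ) • tDm μ (pderiv (Sum.inl (i, μ)) a * h)
  map_add' h k := by
    simp only [mul_add, tDm_add, smul_add]
    exact finsum_add_distrib (hasFiniteSupport_smul_pderiv_mul i a h _ _ tDm_apply_zero)
      (hasFiniteSupport_smul_pderiv_mul i a k _ _ tDm_apply_zero)
  map_smul' c h := by
    simp only [mul_smul_comm, tDm_smul, smul_comm _ c, RingHom.id_apply]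
    exact (smul_finsum' c (hasFiniteSupport_smul_pderiv_mul i a h _ _ tDm_apply_zero)).symm

theorem frechetAdjoint_apply (i : ι) (a h : LocalFn ι n) :
    frechetAdjoint i a h =
      ∑ᶠ μ, ((-1 : ℝ) ^ Multiset.card μ) • tDm μ (pderiv (Sum.inl (i, μ)) a * h) :=
  rfl

@[simp] theorem frechetAdjoint_zero (i : ι) : frechetAdjoint i (0 : LocalFn ι n) = 0 := by
  refine LinearMap.ext fun h => ?_
  simp [frechetAdjoint_apply]

theorem frechetAdjoint_tD (i : ι) (ν : Fin n) (a h : LocalFn ι n) :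
    frechetAdjoint i (tD ν a) h = -frechetAdjoint i a (tD ν h) := by
  set A : Multiset (Fin n) → LocalFn ι n := fun μ =>
    ((-1 : ℝ) ^ Multiset.card μ) • tD ν (tDm μ (pderiv (Sum.inl (i, μ)) a * h))
  set B : Multiset (Fin n) → LocalFn ι n := fun μ =>
    ((-1 : ℝ) ^ Multiset.card μ) • tDm μ (pderiv (Sum.inl (i, μ)) a * tD ν h)
  have hA : Function.HasFiniteSupport A :=
    hasFiniteSupport_smul_pderiv_mul i a h _ (fun μ f => tD ν (tDm μ f)) fun μ => by
      rw [tDm_apply_zero, ← totalDeriv_apply, map_zero]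
  have hB : Function.HasFiniteSupport B :=
    hasFiniteSupport_smul_pderiv_mul i a _ _ _ tDm_apply_zero
  have hterm : ∀ μ, ((-1 : ℝ) ^ Multiset.card μ) •
      tDm μ (pderiv (Sum.inl (i, μ)) (tD ν a) * h) =
        (A μ - B μ) + if ν ∈ μ then -A (μ.erase ν) else 0 := fun μ => by
    rw [pderiv_tD, add_mul, tDm_add, smul_add]
    congr 1
    · rw [show ∀ f, tD ν f * h = tD ν (f * h) - f * tD ν h from fun f => by rw [tD_mul]; ring,
        tDm_sub, smul_sub, tDm_tD]
    · split_ifs with hν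
      · obtain ⟨κ, rfl⟩ : ∃ κ, μ = ν ::ₘ κ := ⟨μ.erase ν, (Multiset.cons_erase hν).symm⟩
        simp [A, tDm_cons, pow_succ]
      · simp
  -- reindexing `μ = ν ::ₘ κ`, the terms with `ν ∈ μ` cancel the total derivatives `Σ A`
  rw [frechetAdjoint_apply, finsum_congr hterm, finsum_add_distrib
    (show Function.HasFiniteSupport fun μ => A μ - B μ from hA.sub hB)
    (show Function.HasFiniteSupport fun μ => if ν ∈ μ then -A (μ.erase ν) else 0 from
      hA.neg.ite_mem_erase ν), finsum_ite_mem_erase ν fun μ => -A μ, finsum_sub_distrib hA hB,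
    finsum_neg_distrib, frechetAdjoint_apply]
  abel

theorem frechetAdjoint_tDm (i : ι) (κ : Multiset (Fin n)) (a h : LocalFn ι n) :
    frechetAdjoint i (tDm κ a) h =
      ((-1 : ℝ) ^ Multiset.card κ) • frechetAdjoint i a (tDm κ h) := by
  induction κ using Multiset.induction_on generalizing h with
  | empty => simp
  | cons ν κ ih =>
    rw [tDm_cons, frechetAdjoint_tD, ih, tDm_tD, ← tDm_cons, Multiset.card_cons, pow_succ,
      mul_comm, ← smul_smul, neg_one_smul]

end FrechetAdjoint

section EulerLagrange

variable {ι : Type} {n : ℕ} [DecidableEq ι]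

theorem frechetAdjoint_eq_sum_vars (i : ι) (a h : LocalFn ι n) :
    frechetAdjoint i a h = ∑ v ∈ a.vars,
      (match v with
      | Sum.inl (j, μ) =>
          if j = i then ((-1 : ℝ) ^ Multiset.card μ) • tDm μ (pderiv (Sum.inl (j, μ)) a * h)
          else 0
      | Sum.inr _ => 0 : LocalFn ι n) := by
  rw [sum_vars_eq_finsum (g := fun μ => Sum.inl (i, μ)) (fun _ _ hμ => by simpa using hμ) a]
  · simp [frechetAdjoint_apply]
  · rintro (⟨j, μ⟩ | x) hv <;> simp [hv]
  · rintro (⟨j, μ⟩ | x) hv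
    · simp only [ite_eq_right_iff]
      rintro rfl
      exact absurd ⟨μ, rfl⟩ hv
    · rfl

theorem EL_eq_frechetAdjoint (i : ι) (f : LocalFn ι n) : EL i f = frechetAdjoint i f 1 := by
  rw [frechetAdjoint_eq_sum_vars, EL]
  refine Finset.sum_congr rfl fun v _ => ?_
  rcases v with ⟨j, μ⟩ | x <;> simp

theorem symTail_eq_sum_frechetAdjoint [Fintype ι] (Q g : ι → LocalFn ι n) (i : ι) :
    symTail Q g i = ∑ j, frechetAdjoint i (Q j) (g j) := by
  simp only [symTail, frechetAdjoint_eq_sum_vars]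

theorem EL_evQ (Q : ι → LocalFn ι n) (i : ι) (f : LocalFn ι n) :
    EL i (evQ Q f) =
      evQ Q (EL i f) + ∑ v ∈ f.vars, frechetAdjoint i (evCoeff Q v) (pderiv v f) := by
  have hterm : ∀ μ : Multiset (Fin n),
      ((-1 : ℝ) ^ Multiset.card μ) • tDm μ (pderiv (Sum.inl (i, μ)) (evQ Q f) * 1) =
        evolutionaryField Q
            (((-1 : ℝ) ^ Multiset.card μ) • tDm μ (pderiv (Sum.inl (i, μ)) f * 1)) +
          ∑ v ∈ f.vars, ((-1 : ℝ) ^ Multiset.card μ) •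
            tDm μ (pderiv (Sum.inl (i, μ)) (evCoeff Q v) * pderiv v f) := fun μ => by
    rw [mul_one, mul_one, pderiv_evQ, tDm_add, smul_add, Derivation.map_smul,
      evolutionaryField_apply, evQ_tDm, ← coe_tDmLinear, map_sum, Finset.smul_sum, coe_tDmLinear]
  rw [EL_eq_frechetAdjoint, EL_eq_frechetAdjoint, frechetAdjoint_apply, finsum_congr hterm,
    finsum_add_distrib
      ((hasFiniteSupport_smul_pderiv_mul i f 1 _ _ tDm_apply_zero).fun_comp (map_zero _))
      (Function.HasFiniteSupport.sum
        (fun v => hasFiniteSupport_smul_pderiv_mul i _ _ _ _ tDm_apply_zero) _),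
    ← map_finsum _ (hasFiniteSupport_smul_pderiv_mul i f 1 _ _ tDm_apply_zero),
    evolutionaryField_apply,
    finsum_sum_comm _ _ fun v _ => hasFiniteSupport_smul_pderiv_mul i _ _ _ _ tDm_apply_zero]
  simp only [frechetAdjoint_apply]

theorem sum_frechetAdjoint_evCoeff [Fintype ι] (Q : ι → LocalFn ι n) (i : ι)
    (f : LocalFn ι n) :
    ∑ v ∈ f.vars, frechetAdjoint i (evCoeff Q v) (pderiv v f) =
      symTail Q (fun j => EL j f) i := by
  simp only [symTail_eq_sum_frechetAdjoint, EL, map_sum]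
  rw [Finset.sum_comm]
  refine Finset.sum_congr rfl fun v _ => ?_
  rcases v with ⟨j, κ⟩ | x
  · simp [evCoeff, frechetAdjoint_tDm, apply_ite]
  · simp [evCoeff]

end EulerLagrange

/-- commutation identity of evolutionary variations with Euler-Lagrange
derivatives:
δ_Q(δf/δφ^i) = δ(δ_Q f)/δφ^i − Σ_{(μ)} (-1)^{|μ|} ∂_{(μ)}[(∂Q^j/∂φ^i_{(μ)}) δf/δφ^j]. -/
theorem evQ_EL_comm {ι : Type} {n : ℕ} [DecidableEq ι] [Fintype ι]
    (f : LocalFn ι n) (Q : ι → LocalFn ι n) (i : ι) :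
    evQ Q (EL i f) = EL i (evQ Q f) - symTail Q (fun j => EL j f) i := by
  rw [EL_evQ, sum_frechetAdjoint_evCoeff, add_sub_cancel_right]
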